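/- Let M₁, M₂ be real matrices of the same dimensions, u a unit vector, θ the smallest principal angle between the column spaces of M₁ and M₂. Then ‖(M₁+M₂)u‖² ≤ ‖M₁‖_S² ‖P₁u‖² + ‖M₂‖_S² ‖P₂u‖² + 2‖M₁‖_S ‖M₂‖_S ‖P₁u‖ ‖P₂u‖ cos θ, where P₁, P₂ are the orthogonal projections onto the row spaces of M₁ and M₂ respectively. -/

import Mathlib

open Matrix Real Set

noncomputable def vnorm {n : Type*} [Fintype n] (v : n → ℝ) : ℝ :=
  Real.sqrt (∑ i, v i ^ 2)

noncomputable def specNorm {m n : Type*} [Fintype m] [Fintype n] (M : Matrix m n ℝ) : ℝ :=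
  sSup {x | ∃ u : n → ℝ, vnorm u = 1 ∧ x = vnorm (M.mulVec u)}

/-- The set whose supremum is the cosine of the smallest principal angle between
the column spaces of two matrices. -/
noncomputable def angleSet {P Q : ℕ} (M1 M2 : Matrix (Fin P) (Fin Q) ℝ) : Set ℝ :=
  {x | ∃ u v : Fin Q → ℝ, M1.mulVec u ≠ 0 ∧ M2.mulVec v ≠ 0 ∧
    x = (∑ i, M1.mulVec u i * M2.mulVec v i) / (vnorm (M1.mulVec u) * vnorm (M2.mulVec v))}

/-- The row space of a matrix, as a subspace of Euclidean space. -/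
def rowSpace {P Q : ℕ} (M : Matrix (Fin P) (Fin Q) ℝ) :
    Submodule ℝ (EuclideanSpace ℝ (Fin Q)) :=
  Submodule.span ℝ (Set.range fun i => (WithLp.equiv 2 (Fin Q → ℝ)).symm (M i))

/-! Write `Aᵢ` for the linear map of `Mᵢ`. It kills the orthogonal complement of the row space,
so `Aᵢ u = Aᵢ (Pᵢ u)` and `‖Aᵢ u‖ ≤ ‖Mᵢ‖_S ‖Pᵢ u‖`. The definition of the principal angle gives
`⟪A₁ u, A₂ u⟫ ≤ ‖A₁ u‖ ‖A₂ u‖ cos θ`, and `cos θ ≥ 0` because the set of cosines is symmetric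
under `v ↦ -v`. Expanding `‖A₁ u + A₂ u‖²` then gives the bound. -/

open WithLp (toLp ofLp)
open scoped RealInnerProductSpace

theorem vnorm_eq_norm_toLp {n : Type*} [Fintype n] (v : n → ℝ) : vnorm v = ‖toLp 2 v‖ := by
  simp [vnorm, EuclideanSpace.norm_eq, sq_abs]

theorem sum_mul_eq_inner_toLp {n : Type*} [Fintype n] (v w : n → ℝ) :
    ∑ i, v i * w i = ⟪toLp 2 v, toLp 2 w⟫ := by
  simp [PiLp.inner_apply, mul_comm]

section SpectralNorm

variable {m n : Type*} [Fintype m] [Fintype n] [DecidableEq n]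

theorem specNorm_eq_norm_toContinuousLinearMap (M : Matrix m n ℝ) :
    specNorm M = ‖LinearMap.toContinuousLinearMap (toEuclideanLin M)‖ := by
  rw [← ContinuousLinearMap.sSup_sphere_eq_norm, specNorm]
  congr 1
  ext x
  constructor
  · rintro ⟨u, hu, rfl⟩
    exact ⟨toLp 2 u, by simpa [vnorm_eq_norm_toLp] using hu, by simp [vnorm_eq_norm_toLp]⟩
  · rintro ⟨x, hx, rfl⟩
    exact ⟨ofLp x, by simpa [vnorm_eq_norm_toLp] using hx, by simp [vnorm_eq_norm_toLp]; rfl⟩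

theorem norm_toEuclideanLin_le (M : Matrix m n ℝ) (x : EuclideanSpace ℝ n) :
    ‖toEuclideanLin M x‖ ≤ specNorm M * ‖x‖ := by
  rw [specNorm_eq_norm_toContinuousLinearMap]
  exact (LinearMap.toContinuousLinearMap (toEuclideanLin M)).le_opNorm x

end SpectralNorm

section RowSpace

variable {P Q : ℕ} (M : Matrix (Fin P) (Fin Q) ℝ)

theorem toEuclideanLin_eq_zero_of_mem_orthogonal {x : EuclideanSpace ℝ (Fin Q)}
    (hx : x ∈ (rowSpace M)ᗮ) : toEuclideanLin M x = 0 := by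
  ext i
  have hrow : toLp 2 (M i) ∈ rowSpace M := Submodule.subset_span ⟨i, rfl⟩
  simpa [toLpLin_apply, mulVec, dotProduct, sum_mul_eq_inner_toLp] using
    Submodule.inner_right_of_mem_orthogonal hrow hx

theorem toEuclideanLin_starProjection_rowSpace (x : EuclideanSpace ℝ (Fin Q)) :
    toEuclideanLin M ((rowSpace M).starProjection x) = toEuclideanLin M x := by
  rw [eq_comm, ← sub_eq_zero, ← map_sub]
  exact toEuclideanLin_eq_zero_of_mem_orthogonal M
    ((rowSpace M).sub_starProjection_mem_orthogonal x)

end RowSpace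

section PrincipalAngle

variable {P Q : ℕ} (M1 M2 : Matrix (Fin P) (Fin Q) ℝ)

theorem bddAbove_angleSet : BddAbove (angleSet M1 M2) := by
  refine ⟨1, ?_⟩
  rintro _ ⟨u, v, -, -, rfl⟩
  rw [sum_mul_eq_inner_toLp, vnorm_eq_norm_toLp, vnorm_eq_norm_toLp]
  exact (le_abs_self _).trans (abs_real_inner_div_norm_mul_norm_le_one _ _)

theorem neg_mem_angleSet {x : ℝ} (hx : x ∈ angleSet M1 M2) : -x ∈ angleSet M1 M2 := by
  obtain ⟨u, v, hu, hv, rfl⟩ := hx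
  refine ⟨u, -v, hu, by simpa [mulVec_neg] using hv, ?_⟩
  simp [mulVec_neg, vnorm, neg_div]

theorem sSup_angleSet_nonneg : 0 ≤ sSup (angleSet M1 M2) := by
  rcases (angleSet M1 M2).eq_empty_or_nonempty with h | ⟨x, hx⟩
  · rw [h, Real.sSup_empty]
  · have := le_csSup (bddAbove_angleSet M1 M2) hx
    have := le_csSup (bddAbove_angleSet M1 M2) (neg_mem_angleSet M1 M2 hx)
    linarith

theorem inner_toEuclideanLin_le_sSup_angleSet (x y : EuclideanSpace ℝ (Fin Q)) :
    ⟪toEuclideanLin M1 x, toEuclideanLin M2 y⟫ ≤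
      ‖toEuclideanLin M1 x‖ * ‖toEuclideanLin M2 y‖ * sSup (angleSet M1 M2) := by
  rcases eq_or_ne (toEuclideanLin M1 x) 0 with hx | hx
  · simp [hx]
  rcases eq_or_ne (toEuclideanLin M2 y) 0 with hy | hy
  · simp [hy]
  have hmem : ⟪toEuclideanLin M1 x, toEuclideanLin M2 y⟫ /
      (‖toEuclideanLin M1 x‖ * ‖toEuclideanLin M2 y‖) ∈ angleSet M1 M2 := by
    refine ⟨ofLp x, ofLp y, fun h => hx ?_, fun h => hy ?_, ?_⟩
    · simp [toLpLin_apply, h]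
    · simp [toLpLin_apply, h]
    · simp only [sum_mul_eq_inner_toLp, vnorm_eq_norm_toLp]; rfl
  have := le_csSup (bddAbove_angleSet M1 M2) hmem
  rwa [div_le_iff₀ (by positivity), mul_comm] at this

end PrincipalAngle

theorem norm_add_sq_le_of_inner_le {F : Type*} [NormedAddCommGroup F] [InnerProductSpace ℝ F]
    {x y : F} {a b c : ℝ} (hx : ‖x‖ ≤ a) (hy : ‖y‖ ≤ b) (hc : 0 ≤ c)
    (hxy : ⟪x, y⟫ ≤ ‖x‖ * ‖y‖ * c) :
    ‖x + y‖ ^ 2 ≤ a ^ 2 + b ^ 2 + 2 * a * b * c := by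
  have hab : ‖x‖ * ‖y‖ * c ≤ a * b * c := by gcongr; exact (norm_nonneg x).trans hx
  have ha2 : ‖x‖ ^ 2 ≤ a ^ 2 := by gcongr
  have hb2 : ‖y‖ ^ 2 ≤ b ^ 2 := by gcongr
  rw [norm_add_sq_real]
  linarith

theorem norm_apply_add_principal_angle_bound_general {P Q : ℕ}
    (M1 M2 : Matrix (Fin P) (Fin Q) ℝ)
    (u : EuclideanSpace ℝ (Fin Q))
    (θ : ℝ)
    (hθ : Real.cos θ = sSup (angleSet M1 M2)) :
    vnorm ((M1 + M2).mulVec (WithLp.equiv 2 (Fin Q → ℝ) u)) ^ 2 ≤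
      specNorm M1 ^ 2 * ‖((rowSpace M1).orthogonalProjectionOnto u : EuclideanSpace ℝ (Fin Q))‖ ^ 2 +
      specNorm M2 ^ 2 * ‖((rowSpace M2).orthogonalProjectionOnto u : EuclideanSpace ℝ (Fin Q))‖ ^ 2 +
      2 * specNorm M1 * specNorm M2 *
        ‖((rowSpace M1).orthogonalProjectionOnto u : EuclideanSpace ℝ (Fin Q))‖ *
        ‖((rowSpace M2).orthogonalProjectionOnto u : EuclideanSpace ℝ (Fin Q))‖ * Real.cos θ := by
  have hsum : vnorm ((M1 + M2).mulVec (WithLp.equiv 2 (Fin Q → ℝ) u)) =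
      ‖toEuclideanLin M1 u + toEuclideanLin M2 u‖ := by
    rw [vnorm_eq_norm_toLp, add_mulVec, WithLp.toLp_add]; rfl
  have hbound (M : Matrix (Fin P) (Fin Q) ℝ) :
      ‖toEuclideanLin M u‖ ≤ specNorm M * ‖(rowSpace M).starProjection u‖ := by
    rw [← toEuclideanLin_starProjection_rowSpace]
    exact norm_toEuclideanLin_le M _
  simp only [← Submodule.starProjection_apply, hsum, hθ]
  refine (norm_add_sq_le_of_inner_le (hbound M1) (hbound M2) (sSup_angleSet_nonneg M1 M2)
    (inner_toEuclideanLin_le_sSup_angleSet M1 M2 u u)).trans_eq ?_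
  ring

/-- for a unit vector `u`,
`‖(M₁+M₂)u‖² ≤ ‖M₁‖_S²‖P₁u‖² + ‖M₂‖_S²‖P₂u‖² + 2‖M₁‖_S‖M₂‖_S‖P₁u‖‖P₂u‖ cos θ`,
where `P_i` is the orthogonal projection onto the row space of `M_i` and `θ`
is the smallest principal angle between the column spaces. -/
theorem norm_apply_add_principal_angle_bound {P Q : ℕ}
    (M1 M2 : Matrix (Fin P) (Fin Q) ℝ)
    (u : EuclideanSpace ℝ (Fin Q)) (hu : ‖u‖ = 1)
    (θ : ℝ) (hθmem : θ ∈ Set.Icc 0 (π / 2))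
    (hθ : Real.cos θ = sSup (angleSet M1 M2)) :
    vnorm ((M1 + M2).mulVec (WithLp.equiv 2 (Fin Q → ℝ) u)) ^ 2 ≤
      specNorm M1 ^ 2 * ‖((rowSpace M1).orthogonalProjectionOnto u : EuclideanSpace ℝ (Fin Q))‖ ^ 2 +
      specNorm M2 ^ 2 * ‖((rowSpace M2).orthogonalProjectionOnto u : EuclideanSpace ℝ (Fin Q))‖ ^ 2 +
      2 * specNorm M1 * specNorm M2 *
        ‖((rowSpace M1).orthogonalProjectionOnto u : EuclideanSpace ℝ (Fin Q))‖ *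
        ‖((rowSpace M2).orthogonalProjectionOnto u : EuclideanSpace ℝ (Fin Q))‖ * Real.cos θ :=
  norm_apply_add_principal_angle_bound_general M1 M2 u θ hθ
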